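/- arXiv:2503.15791 — 6 statements merged into one kernel-verified Lean document; each statement's English description precedes it below -/
import Mathlib

section
/- Let l ≥ 1, let L be a subgroup of ℤ^l, and let w ∈ ℝ^l be a vector lying in the ℝ-linear span of (the image in ℝ^l of) L, with w_i > 0 for every i. Let p > 0 be a real number. Then for every ε' > 0 there exist a positive integer D, an element v ∈ L with v_i > 0 for all i, and a real number ε > 0, such that p·D·ε + p·D·max_{1≤i≤l} ( |w_i − v_i/D| / w_i ) < ε'. -/
/-!
Write `w = ∑ⱼ fⱼ uⱼ` with `uⱼ ∈ L`. Recurrence of `D ↦ D • f` on the compact torus `(ℝ/ℤ)ⁿ`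
(simultaneous Dirichlet approximation) gives `D > 0` with every `D fⱼ` as close as we like to
an integer `aⱼ`; then `v = ∑ⱼ aⱼ uⱼ ∈ L` and `D w - v` is small relative to `min w`. This forces
`v > 0` and makes `D · maxᵢ |wᵢ - vᵢ/D| / wᵢ` small, and `ε` is then taken of size `ε' / (p D)`.
-/

open Filter Topology

theorem exists_pos_norm_nsmul_lt {A : Type*} [SeminormedAddCommGroup A] [CompactSpace A] (x : A)
    {δ : ℝ} (hδ : 0 < δ) : ∃ D : ℕ, 0 < D ∧ ‖D • x‖ < δ := by
  obtain ⟨_, φ, hφ, hlim⟩ := CompactSpace.tendsto_subseq fun n : ℕ => n • x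
  obtain ⟨N, hN⟩ := Metric.cauchySeq_iff.1 hlim.cauchySeq δ hδ
  refine ⟨φ (N + 1) - φ N, Nat.sub_pos_of_lt (hφ N.lt_succ_self), ?_⟩
  rw [sub_nsmul x (hφ N.lt_succ_self).le, ← sub_eq_add_neg, ← dist_eq_norm]
  exact hN _ N.le_succ _ le_rfl

theorem exists_pos_forall_abs_mul_sub_round_lt {ι : Type*} [Fintype ι] (c : ι → ℝ) {δ : ℝ}
    (hδ : 0 < δ) : ∃ D : ℕ, 0 < D ∧ ∀ j, |D * c j - round (D * c j)| < δ := by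
  obtain ⟨D, hD, hlt⟩ := exists_pos_norm_nsmul_lt (fun j => (c j : UnitAddCircle)) hδ
  refine ⟨D, hD, fun j => ?_⟩
  have := (pi_norm_lt_iff hδ).1 hlt j
  rwa [Pi.smul_apply, ← AddCircle.coe_nsmul, UnitAddCircle.norm_eq, nsmul_eq_mul] at this

theorem exists_nsmul_sub_mem_of_mem_span {E : Type*} [AddCommGroup E] [Module ℝ E]
    [TopologicalSpace E] [IsTopologicalAddGroup E] [ContinuousSMul ℝ E] (G : AddSubgroup E)
    {w : E} (hw : w ∈ Submodule.span ℝ (G : Set E)) {U : Set E} (hU : U ∈ 𝓝 0) :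
    ∃ D : ℕ, 0 < D ∧ ∃ g ∈ G, D • w - g ∈ U := by
  obtain ⟨n, f, g, rfl⟩ := Submodule.mem_span_set'.1 hw
  set Φ := Fintype.linearCombination ℝ fun j => (g j : E)
  have hΦU : Φ ⁻¹' U ∈ 𝓝 0 :=
    Φ.continuous_on_pi.continuousAt.preimage_mem_nhds (by rwa [map_zero])
  obtain ⟨δ, hδ, hball⟩ := Metric.mem_nhds_iff.1 hΦU
  obtain ⟨D, hD, hround⟩ := exists_pos_forall_abs_mul_sub_round_lt f hδ
  refine ⟨D, hD, ∑ j, round (D * f j) • (g j : E),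
    sum_mem fun j _ => zsmul_mem (g j).2 _, ?_⟩
  have hmem : D • f - (fun j => (round (D * f j) : ℝ)) ∈ Φ ⁻¹' U := by
    refine hball ?_
    rw [mem_ball_zero_iff, pi_norm_lt_iff hδ]
    simpa using hround
  rw [Set.mem_preimage, map_sub, map_nsmul, Fintype.linearCombination_apply,
    Fintype.linearCombination_apply] at hmem
  simpa only [Int.cast_smul_eq_zsmul] using hmem

theorem exists_forall_abs_mul_sub_lt_of_mem_span {ι : Type*} [Fintype ι]
    (L : AddSubgroup (ι → ℤ)) {w : ι → ℝ}
    (hw : w ∈ Submodule.span ℝ ((fun v : ι → ℤ => fun i => (v i : ℝ)) '' (L : Set (ι → ℤ))))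
    {r : ι → ℝ} (hr : ∀ i, 0 < r i) :
    ∃ D : ℕ, 0 < D ∧ ∃ v ∈ L, ∀ i, |D * w i - v i| < r i := by
  have hU : {x : ι → ℝ | ∀ i, |x i| < r i} ∈ 𝓝 0 :=
    eventually_all.2 fun i => (continuous_apply i).abs.continuousAt.eventually_lt
      continuousAt_const (by simpa using hr i)
  obtain ⟨D, hD, _, ⟨v, hv, rfl⟩, hDv⟩ :=
    exists_nsmul_sub_mem_of_mem_span (L.map ((Int.castAddHom ℝ).compLeft ι))
      (by rwa [AddSubgroup.coe_map]) hU
  exact ⟨D, hD, v, hv, fun i => by simpa using hDv i⟩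

/-- Dirichlet-type simultaneous Diophantine approximation inside a sublattice
(Claim 4.5 of the paper). -/
theorem stmt_0 (l : ℕ) (hl : 1 ≤ l) (L : AddSubgroup (Fin l → ℤ))
    (w : Fin l → ℝ)
    (hw : w ∈ Submodule.span ℝ
      ((fun v : Fin l → ℤ => fun i => (v i : ℝ)) '' (L : Set (Fin l → ℤ))))
    (hwpos : ∀ i, 0 < w i)
    (p : ℝ) (hp : 0 < p) :
    ∀ ε' : ℝ, 0 < ε' →
      ∃ (D : ℕ) (v : Fin l → ℤ) (ε : ℝ),
        0 < D ∧ v ∈ L ∧ (∀ i, 0 < v i) ∧ 0 < ε ∧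
        p * D * ε +
          p * D * (Finset.univ.sup' (Finset.univ_nonempty_iff.mpr ⟨⟨0, hl⟩⟩)
            fun i => |w i - (v i : ℝ) / (D : ℝ)| / w i) < ε' := by
  intro ε' hε'
  set η := min 1 (ε' / (2 * p))
  have hη : 0 < η := lt_min one_pos (by positivity)
  obtain ⟨D, hD, v, hv, happrox⟩ :=
    exists_forall_abs_mul_sub_lt_of_mem_span L hw fun i => mul_pos hη (hwpos i)
  have hD' : (0 : ℝ) < D := by exact_mod_cast hD
  have hvpos : ∀ i, 0 < v i := fun i => by
    have hηw : η * w i ≤ D * w i :=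
      mul_le_mul_of_nonneg_right ((min_le_left _ _).trans (by exact_mod_cast hD))
        (hwpos i).le
    exact_mod_cast (show (0 : ℝ) < v i by linarith [(abs_lt.1 (happrox i)).2])
  have hsup : Finset.univ.sup' (Finset.univ_nonempty_iff.mpr ⟨⟨0, hl⟩⟩)
      (fun i => |w i - (v i : ℝ) / (D : ℝ)| / w i) < η / D := by
    refine (Finset.sup'_lt_iff _).2 fun i _ => ?_
    calc |w i - v i / D| / w i = |D * w i - v i| / (D * w i) := by
          rw [show w i - v i / D = (D * w i - v i) / D by field_simp, abs_div, abs_of_pos hD',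
            div_div]
      _ < η * w i / (D * w i) := by have := hwpos i; gcongr; exact happrox i
      _ = η / D := by field_simp [(hwpos i).ne']
  refine ⟨D, v, ε' / (2 * p * D), hD, hv, hvpos, by positivity, ?_⟩
  have hpη : p * η ≤ ε' / 2 :=
    calc p * η ≤ p * (ε' / (2 * p)) := mul_le_mul_of_nonneg_left (min_le_right _ _) hp.le
      _ = ε' / 2 := by field_simp
  calc _ < p * D * (ε' / (2 * p * D)) + p * D * (η / D) := by gcongr
    _ = ε' / 2 + p * η := by field_simp
    _ ≤ ε' := by linarith
end

section
/- Let l ≥ 1, let L be a subgroup of ℤ^l, and let w ∈ ℝ^l have all coordinates positive and lie in the ℝ-linear span of (the image in ℝ^l of) L. Then for every δ > 0 there exist r ∈ ℕ, positive integers D_1, …, D_r, and elements v_1, …, v_r ∈ L such that: (i) |D_k·w_i − (v_k)_i| < δ for all 1 ≤ k ≤ r and 1 ≤ i ≤ l; (ii) the vectors v_1, …, v_r are linearly independent over ℝ; (iii) w is a nonnegative real linear combination of v_1, …, v_r, i.e. w lies in the simplicial cone ℝ_{≥0}·v_1 + … + ℝ_{≥0}·v_r. -/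
/-!
Call `D • w - g`, for `D > 0` and `g` in the lattice, an error if its norm is below `δ`. The set
of errors is almost symmetric: by Dirichlet's simultaneous approximation some larger multiple of
`w` is approximated much better, and subtracting an error from it yields an error close to its
negative. So the closure of the cone generated by the errors contains their span, and a convex
cone that is dense in a finite-dimensional space is the whole space. Hence the cone contains the
negative of an error `D • w - g`, which rearranges to `w` being a nonnegative combination of
approximants; Carathéodory's theorem for cones extracts a linearly independent subfamily.
-/

open Finset PointedCone

section Caratheodory

variable {𝕜 E : Type*} [Field 𝕜] [LinearOrder 𝕜] [IsStrictOrderedRing 𝕜]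
  [AddCommGroup E] [Module 𝕜 E]

theorem PointedCone.mem_hull_finset_iff {t : Finset E} {x : E} :
    x ∈ hull 𝕜 (t : Set E) ↔ ∃ f : E → 𝕜, (∀ i ∈ t, 0 ≤ f i) ∧ ∑ i ∈ t, f i • i = x := by
  constructor
  · intro hx
    obtain ⟨f, -, rfl⟩ := Submodule.mem_span_finset.1 hx
    exact ⟨fun i => f i, fun i _ => (f i).2, rfl⟩
  · rintro ⟨f, hf, rfl⟩
    exact Submodule.sum_mem _ fun i hi => smul_mem _ (hf i hi) (subset_hull hi)

theorem PointedCone.exists_mem_hull_erase_of_not_linearIndepOn [DecidableEq E] {t : Finset E}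
    (ht : ¬LinearIndepOn 𝕜 id (t : Set E)) {x : E} (hx : x ∈ hull 𝕜 (t : Set E)) :
    ∃ j ∈ t, x ∈ hull 𝕜 (t.erase j : Set E) := by
  obtain ⟨f, hf, rfl⟩ := mem_hull_finset_iff.1 hx
  obtain ⟨g, hg, hgpos⟩ : ∃ g : E → 𝕜, ∑ i ∈ t, g i • i = 0 ∧ ∃ i ∈ t, 0 < g i := by
    simp only [linearIndepOn_finset_iff, id, not_forall, exists_prop] at ht
    obtain ⟨g, hg, i, hi, hgi⟩ := ht
    rcases lt_or_gt_of_ne hgi with hneg | hpos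
    · refine ⟨-g, by simp [neg_smul, sum_neg_distrib, hg], i, hi, by simpa using hneg⟩
    · exact ⟨g, hg, i, hi, hpos⟩
  set P := {i ∈ t | 0 < g i}
  obtain ⟨j, hjP, hjmin⟩ := P.exists_min_image (fun i => f i / g i) <| by
    obtain ⟨i, hi, hgi⟩ := hgpos
    exact ⟨i, mem_filter.2 ⟨hi, hgi⟩⟩
  obtain ⟨hj, hgj⟩ := mem_filter.1 hjP
  -- Moving along the relation `g` until the first coefficient vanishes.
  set f' : E → 𝕜 := fun i => f i - f j / g j * g i
  have hf'j : f' j = 0 := by simp [f', hgj.ne']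
  have hf' : ∀ i ∈ t, 0 ≤ f' i := by
    intro i hi
    by_cases hgi : 0 < g i
    · have := hjmin i (mem_filter.2 ⟨hi, hgi⟩)
      rw [le_div_iff₀ hgi] at this
      exact sub_nonneg.2 this
    · have : f j / g j * g i ≤ 0 :=
        mul_nonpos_of_nonneg_of_nonpos (div_nonneg (hf j hj) hgj.le) (not_lt.1 hgi)
      simp only [f']
      linarith [hf i hi]
  refine ⟨j, hj, mem_hull_finset_iff.2 ⟨f', fun i hi => hf' i (mem_of_mem_erase hi), ?_⟩⟩
  calc ∑ i ∈ t.erase j, f' i • i = ∑ i ∈ t, f' i • i := sum_erase _ (by rw [hf'j, zero_smul])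
    _ = ∑ i ∈ t, f i • i := by
      simp only [f', sub_smul, mul_smul, sum_sub_distrib, ← smul_sum, hg, smul_zero, sub_zero]

theorem PointedCone.exists_linearIndepOn_of_mem_hull {s : Set E} {x : E} (hx : x ∈ hull 𝕜 s) :
    ∃ t : Finset E, ↑t ⊆ s ∧ LinearIndepOn 𝕜 id (t : Set E) ∧ x ∈ hull 𝕜 (t : Set E) := by
  classical
  obtain ⟨t, hts, hxt⟩ := Submodule.mem_span_finite_of_mem_span hx
  induction t using Finset.strongInduction with
  | H t ih =>
    by_cases hli : LinearIndepOn 𝕜 id (t : Set E)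
    · exact ⟨t, hts, hli, hxt⟩
    · obtain ⟨j, hj, hxj⟩ := exists_mem_hull_erase_of_not_linearIndepOn hli hxt
      exact ih _ (erase_ssubset hj) ((coe_subset.2 (erase_subset j t)).trans hts) hxj

theorem PointedCone.exists_fin_linearIndependent_of_mem_hull {s : Set E} {x : E}
    (hx : x ∈ hull 𝕜 s) :
    ∃ (r : ℕ) (u : Fin r → E), (∀ k, u k ∈ s) ∧ LinearIndependent 𝕜 u ∧
      ∃ c : Fin r → 𝕜, (∀ k, 0 ≤ c k) ∧ x = ∑ k, c k • u k := by
  obtain ⟨t, hts, hli, hxt⟩ := exists_linearIndepOn_of_mem_hull hx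
  obtain ⟨f, hf, rfl⟩ := mem_hull_finset_iff.1 hxt
  set e := t.equivFin
  refine ⟨t.card, fun k => e.symm k, fun k => hts (e.symm k).2, hli.comp _ e.symm.injective,
    fun k => f (e.symm k), fun k => hf _ (e.symm k).2, ?_⟩
  rw [← sum_coe_sort t]
  exact (e.symm.sum_comp fun i : t => f i • (i : E)).symm

end Caratheodory

section DenseCone

variable {E : Type*} [NormedAddCommGroup E] [NormedSpace ℝ E] [FiniteDimensional ℝ E]

theorem PointedCone.hull_eq_top_of_neg_mem_closure {S : Set E}
    (hS : Submodule.span ℝ S = ⊤) (hneg : ∀ s ∈ S, -s ∈ closure S) : hull ℝ S = ⊤ := by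
  set C := hull ℝ S
  have hdense : closure (C : Set E) = Set.univ := by
    have : Submodule.span ℝ S ≤ C.closure.lineal := Submodule.span_le.2 fun s hs =>
      ⟨subset_closure (subset_hull hs), closure_mono subset_hull (hneg s hs)⟩
    rw [hS, top_le_iff] at this
    exact Set.eq_univ_of_forall fun x => (this ▸ Submodule.mem_top : x ∈ C.closure.lineal).1
  have hint : (interior (C : Set E)).Nonempty := by
    rw [C.convex.interior_nonempty_iff_affineSpan_eq_top,
      AffineSubspace.affineSpan_eq_top_iff_vectorSpan_eq_top_of_nonempty ℝ E E ⟨0, C.zero_mem⟩,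
      vectorSpan_eq_span_vsub_set_right ℝ C.zero_mem, eq_top_iff, ← hS]
    refine Submodule.span_mono fun s hs => ⟨s, subset_hull hs, by simp⟩
  obtain ⟨u, hu⟩ := hint
  refine eq_top_iff.2 fun x _ => interior_subset ?_
  -- `x` is the midpoint of `u ∈ interior C` and `2 • x - u ∈ closure C`.
  have := C.convex.combo_closure_interior_mem_interior (x := (2 : ℝ) • x - u)
    (hdense ▸ Set.mem_univ _) hu (a := 1 / 2) (b := 1 / 2) (by norm_num) (by norm_num) (by norm_num)
  convert this using 1
  module

theorem PointedCone.mem_hull_of_mem_span {S : Set E} (hneg : ∀ s ∈ S, -s ∈ closure S) {x : E}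
    (hx : x ∈ Submodule.span ℝ S) : x ∈ hull ℝ S := by
  set V := Submodule.span ℝ S
  have hS : ((↑) : V → E) '' ((↑) ⁻¹' S) = S :=
    Set.image_preimage_eq_of_subset fun s hs => ⟨⟨s, Submodule.subset_span hs⟩, rfl⟩
  have htop : hull ℝ (((↑) : V → E) ⁻¹' S) = ⊤ := by
    refine hull_eq_top_of_neg_mem_closure Submodule.span_span_coe_preimage fun s hs => ?_
    rw [closure_subtype, hS]
    exact hneg s hs
  have := Submodule.mem_map_of_mem (f := V.subtype.restrictScalars {c : ℝ // 0 ≤ c})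
    (htop ▸ Submodule.mem_top : (⟨x, hx⟩ : V) ∈ hull ℝ (((↑) : V → E) ⁻¹' S))
  rwa [Submodule.map_span, LinearMap.coe_restrictScalars, Submodule.coe_subtype, hS] at this

end DenseCone

theorem exists_pos_nat_abs_mul_sub_int_lt {ι : Type*} [Fintype ι] (a : ι → ℝ) {ε : ℝ}
    (hε : 0 < ε) : ∃ D : ℕ, 0 < D ∧ ∃ z : ι → ℤ, ∀ j, |D * a j - z j| < ε := by
  -- Two terms of a convergent subsequence of the fractional parts of `n • a` are `ε`-close.
  set y : ℕ → ι → ℝ := fun n j => Int.fract (n * a j)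
  obtain ⟨_, -, φ, hφ, hlim⟩ :=
    (isCompact_Icc (a := (0 : ι → ℝ)) (b := 1)).tendsto_subseq (x := y)
      fun n => ⟨fun j => Int.fract_nonneg _, fun j => (Int.fract_lt_one _).le⟩
  obtain ⟨N, hN⟩ := Metric.cauchySeq_iff'.1 hlim.cauchySeq ε hε
  have hlt : φ N < φ (N + 1) := hφ N.lt_succ_self
  refine ⟨φ (N + 1) - φ N, Nat.sub_pos_of_lt hlt,
    fun j => ⌊φ (N + 1) * a j⌋ - ⌊φ N * a j⌋, fun j => ?_⟩
  have hj : (↑(φ (N + 1) - φ N) : ℝ) * a j - ↑(⌊φ (N + 1) * a j⌋ - ⌊φ N * a j⌋)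
      = y (φ (N + 1)) j - y (φ N) j := by
    simp only [y, ← Int.self_sub_floor, Nat.cast_sub hlt.le]
    push_cast
    ring
  rw [hj, ← Real.dist_eq]
  exact (dist_le_pi_dist _ _ j).trans_lt (hN (N + 1) N.le_succ)

section Approximants

variable {E : Type*} [NormedAddCommGroup E] [NormedSpace ℝ E]

def niceApproximants (G : AddSubgroup E) (w : E) (δ : ℝ) : Set E :=
  {g | g ∈ G ∧ ∃ D : ℕ, 0 < D ∧ ‖D • w - g‖ < δ}

def approximationErrors (G : AddSubgroup E) (w : E) (δ : ℝ) : Set E :=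
  {x | ‖x‖ < δ ∧ ∃ D : ℕ, 0 < D ∧ ∃ g ∈ G, D • w - g = x}

variable {G : AddSubgroup E} {w : E}

theorem exists_pos_nsmul_sub_norm_lt_of_mem_span (hw : w ∈ Submodule.span ℝ (G : Set E))
    {ε : ℝ} (hε : 0 < ε) : ∃ D : ℕ, 0 < D ∧ ∃ g ∈ G, ‖D • w - g‖ < ε := by
  obtain ⟨m, a, u, rfl⟩ := Submodule.mem_span_set'.1 hw
  set B := ∑ j, ‖(u j : E)‖ + 1
  have hB : 0 < B := by positivity
  obtain ⟨D, hD, z, hz⟩ := exists_pos_nat_abs_mul_sub_int_lt a (div_pos hε hB)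
  refine ⟨D, hD, ∑ j, z j • (u j : E), G.sum_mem fun j _ => G.zsmul_mem (u j).2 _, ?_⟩
  have herr : D • ∑ j, a j • (u j : E) - ∑ j, z j • (u j : E)
      = ∑ j, (D * a j - z j) • (u j : E) := by
    simp only [← Nat.cast_smul_eq_nsmul ℝ, ← Int.cast_smul_eq_zsmul ℝ, smul_sum, smul_smul,
      ← sum_sub_distrib, sub_smul]
  rw [herr]
  calc ‖∑ j, (D * a j - z j) • (u j : E)‖
      ≤ ∑ j, ε / B * ‖(u j : E)‖ := by
        refine (norm_sum_le _ _).trans (sum_le_sum fun j _ => ?_)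
        rw [norm_smul, Real.norm_eq_abs]
        exact mul_le_mul_of_nonneg_right (hz j).le (norm_nonneg _)
    _ = ε / B * (B - 1) := by rw [← mul_sum]; ring
    _ < ε := by
        rw [div_mul_eq_mul_div, div_lt_iff₀ hB]
        linarith

variable {δ : ℝ}

theorem neg_mem_closure_approximationErrors (hw : w ∈ Submodule.span ℝ (G : Set E)) {x : E}
    (hx : x ∈ approximationErrors G w δ) : -x ∈ closure (approximationErrors G w δ) := by
  obtain ⟨hxδ, D, -, g, hg, rfl⟩ := hx
  refine Metric.mem_closure_iff.2 fun σ hσ => ?_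
  set ρ := min σ (δ - ‖D • w - g‖)
  have hρ : 0 < ρ := lt_min hσ (sub_pos.2 hxδ)
  obtain ⟨D', hD', g', hg', hnear⟩ :=
    exists_pos_nsmul_sub_norm_lt_of_mem_span hw (div_pos hρ (Nat.cast_pos.2 D.succ_pos))
  -- Scaling by `D + 1` makes the approximant's multiplier exceed `D`.
  have hscaled : ‖(D + 1) • (D' • w - g')‖ < ρ := by
    rw [← Nat.cast_smul_eq_nsmul ℝ, norm_smul, Real.norm_natCast,
      ← lt_div_iff₀' (Nat.cast_pos.2 D.succ_pos)]
    exact_mod_cast hnear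
  have hlt : D < (D + 1) * D' := by nlinarith
  have heq : ((D + 1) * D' - D) • w - ((D + 1) • g' - g)
      = (D + 1) • (D' • w - g') - (D • w - g) := by
    rw [sub_nsmul w hlt.le, mul_nsmul', nsmul_sub]
    abel
  refine ⟨_, ⟨?_, _, Nat.sub_pos_of_lt hlt, _, G.sub_mem (G.nsmul_mem hg' _) hg, heq⟩, ?_⟩
  · calc ‖(D + 1) • (D' • w - g') - (D • w - g)‖
        ≤ ‖(D + 1) • (D' • w - g')‖ + ‖D • w - g‖ := norm_sub_le _ _
      _ < δ := by linarith [min_le_right σ (δ - ‖D • w - g‖)]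
  · rw [dist_eq_norm, neg_sub_left, sub_add_cancel, norm_neg]
    exact hscaled.trans_le (min_le_left _ _)

theorem mem_hull_niceApproximants [FiniteDimensional ℝ E]
    (hw : w ∈ Submodule.span ℝ (G : Set E)) (hδ : 0 < δ) :
    w ∈ hull ℝ (niceApproximants G w δ) := by
  set N := hull ℝ (niceApproximants G w δ)
  -- Every cone combination of errors `D • w - g` is `T • w` minus a cone combination of `g`s.
  have herr : ∀ y ∈ hull ℝ (approximationErrors G w δ), ∃ T : ℝ, 0 ≤ T ∧ T • w - y ∈ N := by
    intro y hy
    induction hy using Submodule.span_induction with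
    | mem y hy =>
      obtain ⟨hyδ, D, hD, g, hg, rfl⟩ := hy
      refine ⟨D, D.cast_nonneg, ?_⟩
      rw [Nat.cast_smul_eq_nsmul, sub_sub_cancel]
      exact subset_hull ⟨hg, D, hD, hyδ⟩
    | zero => exact ⟨0, le_rfl, by simp⟩
    | add y y' _ _ hy hy' =>
      obtain ⟨T, hT, hTy⟩ := hy
      obtain ⟨T', hT', hTy'⟩ := hy'
      refine ⟨T + T', add_nonneg hT hT', ?_⟩
      convert N.add_mem hTy hTy' using 1
      module
    | smul c y _ hy =>
      obtain ⟨T, hT, hTy⟩ := hy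
      refine ⟨c * T, mul_nonneg c.2 hT, ?_⟩
      convert N.smul_mem c.2 hTy using 1
      simp only [smul_sub, mul_smul]
      rfl
  obtain ⟨D, hD, g, hg, hnear⟩ := exists_pos_nsmul_sub_norm_lt_of_mem_span hw hδ
  have hx : D • w - g ∈ approximationErrors G w δ := ⟨hnear, D, hD, g, hg, rfl⟩
  obtain ⟨T, hT, hTx⟩ := herr _ <| mem_hull_of_mem_span
    (fun s hs => neg_mem_closure_approximationErrors hw hs)
    (Submodule.neg_mem _ (Submodule.subset_span hx))
  have hpos : 0 < T + D := by positivity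
  have hw' : (T + D) • w ∈ N := by
    convert N.add_mem hTx (subset_hull ⟨hg, D, hD, hnear⟩) using 1
    rw [add_smul, Nat.cast_smul_eq_nsmul]
    abel
  convert N.smul_mem (inv_nonneg.2 hpos.le) hw' using 1
  rw [smul_smul, inv_mul_cancel₀ hpos.ne', one_smul]

end Approximants

theorem stmt_2_general (l : ℕ) (L : AddSubgroup (Fin l → ℤ))
    (w : Fin l → ℝ)
    (hw : w ∈ Submodule.span ℝ
      ((fun v : Fin l → ℤ => fun i => (v i : ℝ)) '' (L : Set (Fin l → ℤ)))) :
    ∀ δ : ℝ, 0 < δ →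
      ∃ (r : ℕ) (D : Fin r → ℕ) (v : Fin r → (Fin l → ℤ)),
        (∀ k, 0 < D k) ∧ (∀ k, v k ∈ L) ∧
        (∀ k i, |(D k : ℝ) * w i - (v k i : ℝ)| < δ) ∧
        LinearIndependent ℝ (fun k : Fin r => fun i : Fin l => (v k i : ℝ)) ∧
        ∃ c : Fin r → ℝ, (∀ k, 0 ≤ c k) ∧
          w = ∑ k, c k • (fun i : Fin l => (v k i : ℝ)) := by
  intro δ hδ
  set G := L.map (AddMonoidHom.compLeft (Int.castAddHom ℝ) (Fin l))
  obtain ⟨r, u, hu, hli, c, hc, hwc⟩ :=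
    exists_fin_linearIndependent_of_mem_hull (mem_hull_niceApproximants (G := G) hw hδ)
  choose hG D hD hnear using hu
  choose v hvL hv using fun k => AddSubgroup.mem_map.1 (hG k)
  obtain rfl : u = fun k i => (v k i : ℝ) := funext fun k => (hv k).symm
  refine ⟨r, D, v, hD, hvL, fun k i => ?_, hli, c, hc, hwc⟩
  simpa using (pi_norm_lt_iff hδ).1 (hnear k) i

/-- Existence of a rational simplicial cone containing `w` whose extremal rays are
spanned by nice approximants of `w` lying in the lattice `L`
(Theorem 4.7(a) of the paper). -/
theorem stmt_2 (l : ℕ) (hl : 1 ≤ l) (L : AddSubgroup (Fin l → ℤ))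
    (w : Fin l → ℝ) (hwpos : ∀ i, 0 < w i)
    (hw : w ∈ Submodule.span ℝ
      ((fun v : Fin l → ℤ => fun i => (v i : ℝ)) '' (L : Set (Fin l → ℤ)))) :
    ∀ δ : ℝ, 0 < δ →
      ∃ (r : ℕ) (D : Fin r → ℕ) (v : Fin r → (Fin l → ℤ)),
        (∀ k, 0 < D k) ∧ (∀ k, v k ∈ L) ∧
        (∀ k i, |(D k : ℝ) * w i - (v k i : ℝ)| < δ) ∧
        LinearIndependent ℝ (fun k : Fin r => fun i : Fin l => (v k i : ℝ)) ∧
        ∃ c : Fin r → ℝ, (∀ k, 0 ≤ c k) ∧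
          w = ∑ k, c k • (fun i : Fin l => (v k i : ℝ)) :=
  stmt_2_general l L w hw
end

section
/- Let n ≥ 1, let w_1, …, w_n, w be positive integers and m an integer, and set C_i := max{w, w + m/w_i} (1 ≤ i ≤ n) and D := max{w_1 + … + w_n − m/w, w_1, …, w_n}. Then every tuple of nonnegative integers (a_1, …, a_n, b) with Σ_i a_i·w_i − b·w = m can be written as a_i = a'_i + a''_i (for all i) and b = b' + b'' with all entries nonnegative integers, such that Σ_i a'_i·w_i − b'·w = m, Σ_i a''_i·w_i − b''·w = 0, and a'_i < C_i for all i and b' < D. -/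
/-- The Claim in the proof of Lemma 3.9 of the paper: every monomial `x^a t^b` of
weight `m` factors as a monomial of weight `m` with bounded exponents times an
invariant (weight-0) monomial. -/
theorem stmt_4 (n : ℕ) (hn : 1 ≤ n) (w : Fin n → ℕ) (hw : ∀ i, 0 < w i)
    (wb : ℕ) (hwb : 0 < wb) (m : ℤ)
    (a : Fin n → ℕ) (b : ℕ)
    (hab : (∑ i, (a i : ℤ) * (w i : ℤ)) - (b : ℤ) * (wb : ℤ) = m) :
    ∃ (a' a'' : Fin n → ℕ) (b' b'' : ℕ),
      (∀ i, a i = a' i + a'' i) ∧ b = b' + b'' ∧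
      (∑ i, (a' i : ℤ) * (w i : ℤ)) - (b' : ℤ) * (wb : ℤ) = m ∧
      (∑ i, (a'' i : ℤ) * (w i : ℤ)) - (b'' : ℤ) * (wb : ℤ) = 0 ∧
      (∀ i, (a' i : ℝ) < max (wb : ℝ) ((wb : ℝ) + (m : ℝ) / (w i : ℝ))) ∧
      (b' : ℝ) < max ((∑ i, (w i : ℝ)) - (m : ℝ) / (wb : ℝ))
        (Finset.univ.sup' (Finset.univ_nonempty_iff.mpr ⟨⟨0, hn⟩⟩)
          fun i => (w i : ℝ)) := by
  induction b using Nat.strong_induction_on generalizing a with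
  | _ b ih =>
  by_cases hdone : (∀ i, (a i : ℝ) < max (wb : ℝ) ((wb : ℝ) + (m : ℝ) / (w i : ℝ))) ∧
      (b : ℝ) < max ((∑ i, (w i : ℝ)) - (m : ℝ) / (wb : ℝ))
        (Finset.univ.sup' (Finset.univ_nonempty_iff.mpr ⟨⟨0, hn⟩⟩)
          fun i => (w i : ℝ))
  · exact ⟨a, 0, b, 0, fun i => (add_zero _).symm, (add_zero _).symm,
      by simpa using hab, by simp, hdone.1, hdone.2⟩
  · -- find i with wb ≤ a i and w i ≤ b
    have hkey : ∃ i, wb ≤ a i ∧ w i ≤ b := by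
      rcases not_and_or.mp hdone with h | h
      · push_neg at h
        obtain ⟨i, hi⟩ := h
        have h1 : wb ≤ a i := by
          have := le_trans (le_max_left (wb:ℝ) _) hi
          exact_mod_cast this
        refine ⟨i, h1, ?_⟩
        have h2 : (wb:ℝ) + (m:ℝ)/(w i:ℝ) ≤ a i := le_trans (le_max_right _ _) hi
        have hwi : (0:ℝ) < (w i : ℝ) := by exact_mod_cast hw i
        have h3 : (wb:ℝ)*(w i:ℝ) + (m:ℝ) ≤ (a i:ℝ)*(w i:ℝ) := by
          have := mul_le_mul_of_nonneg_right h2 hwi.le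
          rwa [add_mul, div_mul_cancel₀ _ hwi.ne'] at this
        have h4 : (wb:ℤ)*(w i:ℤ) + m ≤ (a i:ℤ)*(w i:ℤ) := by exact_mod_cast h3
        have h5 : (a i:ℤ)*(w i:ℤ) ≤ ∑ j, (a j : ℤ) * (w j : ℤ) :=
          Finset.single_le_sum (f := fun j => (a j:ℤ)*(w j:ℤ))
            (fun j _ => by positivity) (Finset.mem_univ i)
        have h6 : (w i:ℤ)*(wb:ℤ) ≤ (b:ℤ)*(wb:ℤ) := by linarith
        have h7 : (w i:ℤ) ≤ (b:ℤ) :=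
          le_of_mul_le_mul_right h6 (by exact_mod_cast hwb)
        exact_mod_cast h7
      · push_neg at h
        have hb1 : (∑ i, (w i : ℝ)) - (m:ℝ)/(wb:ℝ) ≤ b := le_trans (le_max_left _ _) h
        have hb2 : ∀ i, w i ≤ b := by
          intro i
          have : (w i : ℝ) ≤ b :=
            le_trans (le_trans (Finset.le_sup' (fun i => (w i : ℝ)) (Finset.mem_univ i))
              (le_max_right _ _)) h
          exact_mod_cast this
        have hwbr : (0:ℝ) < (wb:ℝ) := by exact_mod_cast hwb
        have hb3 : (wb:ℝ)*(∑ i, (w i : ℝ)) - (m:ℝ) ≤ (b:ℝ)*(wb:ℝ) := by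
          have := mul_le_mul_of_nonneg_right hb1 hwbr.le
          rw [sub_mul, div_mul_cancel₀ _ hwbr.ne'] at this
          linarith
        have hb4 : (wb:ℤ)*(∑ i, (w i : ℤ)) - m ≤ (b:ℤ)*(wb:ℤ) := by
          have : ((wb:ℤ)*(∑ i, (w i : ℤ)) - m : ℝ) ≤ ((b:ℤ)*(wb:ℤ) : ℝ) := by
            push_cast; push_cast at hb3; linarith
          exact_mod_cast this
        have hsum : (wb:ℤ)*(∑ i, (w i : ℤ)) ≤ ∑ j, (a j : ℤ) * (w j : ℤ) := by linarith
        have hA : ∃ i, wb ≤ a i := by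
          by_contra hcon
          push_neg at hcon
          have hlt : ∑ j, (a j : ℤ) * (w j : ℤ) < (wb:ℤ)*(∑ i, (w i : ℤ)) := by
            have h1 : ∀ j : Fin n, (a j : ℤ) * (w j : ℤ) ≤ ((wb:ℤ)-1)*(w j:ℤ) := by
              intro j
              have hc := hcon j
              have haj : (a j:ℤ) ≤ (wb:ℤ)-1 := by omega
              exact mul_le_mul_of_nonneg_right haj (by positivity)
            have h2 : ∑ j, (a j : ℤ) * (w j : ℤ) ≤ ∑ j, ((wb:ℤ)-1)*(w j:ℤ) :=
              Finset.sum_le_sum fun j _ => h1 j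
            have h3 : (0:ℤ) < ∑ i, (w i : ℤ) := by
              apply Finset.sum_pos (fun i _ => by exact_mod_cast hw i)
              exact Finset.univ_nonempty_iff.mpr ⟨⟨0, hn⟩⟩
            calc ∑ j, (a j : ℤ) * (w j : ℤ) ≤ ((wb:ℤ)-1) * ∑ j, (w j:ℤ) := by
                  rw [← Finset.mul_sum] at h2; exact h2
              _ < (wb:ℤ)*(∑ i, (w i : ℤ)) := by nlinarith
          omega
        obtain ⟨i, hi⟩ := hA
        exact ⟨i, hi, hb2 i⟩
    obtain ⟨i, hai, hbi⟩ := hkey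
    set a₂ : Fin n → ℕ := fun j => if j = i then a i - wb else a j with ha₂
    have hsum₂ : ∑ j, (a₂ j : ℤ) * (w j : ℤ)
        = (∑ j, (a j : ℤ) * (w j : ℤ)) - (wb:ℤ)*(w i:ℤ) := by
      have heach : ∀ j, (a₂ j : ℤ) * (w j : ℤ)
          = (a j : ℤ) * (w j : ℤ) - (if j = i then (wb:ℤ)*(w i:ℤ) else 0) := by
        intro j
        by_cases h : j = i
        · subst h
          simp only [ha₂, if_pos rfl, ite_true]
          rw [Nat.cast_sub hai]; ring
        · simp [ha₂, h]
      rw [Finset.sum_congr rfl (fun j _ => heach j), Finset.sum_sub_distrib,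
        Finset.sum_ite_eq' Finset.univ i]
      simp
    have hab₂ : (∑ j, (a₂ j : ℤ) * (w j : ℤ)) - ((b - w i : ℕ) : ℤ) * (wb : ℤ) = m := by
      rw [hsum₂, Nat.cast_sub hbi]
      linarith [hab]
    have hblt : b - w i < b := Nat.sub_lt (lt_of_lt_of_le (hw i) hbi) (hw i)
    obtain ⟨a', a'', b', b'', heq, hbeq, hm, h0, hbd1, hbd2⟩ := ih (b - w i) hblt a₂ hab₂
    refine ⟨a', (fun j => if j = i then a'' j + wb else a'' j), b', b'' + w i, ?_, ?_, hm, ?_, hbd1, hbd2⟩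
    · intro j
      by_cases h : j = i
      · subst h
        have := heq j
        simp only [ha₂, if_pos rfl, ite_true] at this ⊢
        omega
      · have := heq j
        simp only [ha₂, if_neg h] at this ⊢
        omega
    · omega
    · have heach : ∀ j, ((if j = i then a'' j + wb else a'' j : ℕ) : ℤ) * (w j : ℤ)
          = (a'' j : ℤ) * (w j : ℤ) + (if j = i then (wb:ℤ)*(w i:ℤ) else 0) := by
        intro j
        by_cases h : j = i
        · subst h; simp; ring
        · simp [h]
      rw [Finset.sum_congr rfl (fun j _ => heach j), Finset.sum_add_distrib,
        Finset.sum_ite_eq' Finset.univ i]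
      push_cast
      simp only [Finset.mem_univ, if_true]
      linarith [h0]
end

section
/- For all real numbers d, e, f there exist real numbers a, b such that, in the algebra ℍ of real quaternions, the element q := exp(a·i + b·j) satisfies q · ( √(d² + e² + f²) · i ) · q⁻¹ = d·i + e·j + f·k. -/
/-!
Write `v = d·i + e·j + f·k` and `c = |v|`, and assume `v ≠ c·i`. The quaternion
`w = (v - c·i)·k` is the product of two half-turns: conjugation by `k` sends `c·i` to `-c·i`,
and conjugation by `v - c·i` sends `-c·i` to `v`, so `w (c·i) w⁻¹ = v`. The `k`-component of `w`
vanishes, so the unit quaternion `w / |w|` has polar form `exp (a·i + b·j)`.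
-/

/-- The imaginary unit `i` of the real quaternions. -/
def quatI : Quaternion ℝ := ⟨0, 1, 0, 0⟩

/-- The imaginary unit `j` of the real quaternions. -/
def quatJ : Quaternion ℝ := ⟨0, 0, 1, 0⟩

/-- The imaginary unit `k` of the real quaternions. -/
def quatK : Quaternion ℝ := ⟨0, 0, 0, 1⟩

theorem sub_mul_mul_eq_mul_sub_mul_of_anticomm {R : Type*} [Ring R] {u v w : R}
    (huv : u * u = v * v) (hw : w * u = -(u * w)) :
    (v - u) * w * u = v * ((v - u) * w) :=
  calc (v - u) * w * u = (u * u - v * u) * w := by rw [mul_assoc, hw]; noncomm_ring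
    _ = v * ((v - u) * w) := by rw [huv]; noncomm_ring

@[simp] lemma quatI_re : quatI.re = 0 := rfl
@[simp] lemma quatI_imI : quatI.imI = 1 := rfl
@[simp] lemma quatI_imJ : quatI.imJ = 0 := rfl
@[simp] lemma quatI_imK : quatI.imK = 0 := rfl
@[simp] lemma quatJ_re : quatJ.re = 0 := rfl
@[simp] lemma quatJ_imI : quatJ.imI = 0 := rfl
@[simp] lemma quatJ_imJ : quatJ.imJ = 1 := rfl
@[simp] lemma quatJ_imK : quatJ.imK = 0 := rfl
@[simp] lemma quatK_re : quatK.re = 0 := rfl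
@[simp] lemma quatK_imI : quatK.imI = 0 := rfl
@[simp] lemma quatK_imJ : quatK.imJ = 0 := rfl
@[simp] lemma quatK_imK : quatK.imK = 1 := rfl

namespace Quaternion

theorem mul_self_eq_mul_self_of_re_eq_zero {a b : ℍ[ℝ]} (ha : a.re = 0) (hb : b.re = 0)
    (hab : normSq a = normSq b) : a * a = b * b := by
  rw [← sq, ← sq, sq_eq_neg_normSq.2 ha, sq_eq_neg_normSq.2 hb, hab]

theorem exp_smul_of_re_eq_zero_of_norm_eq_one {u : ℍ[ℝ]} (hu : u.re = 0) (hu1 : ‖u‖ = 1)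
    (θ : ℝ) : NormedSpace.exp (θ • u) = ↑(Real.cos θ) + Real.sin θ • u := by
  have hsin : Real.sin |θ| / |θ| * θ = Real.sin θ := by
    rcases abs_cases θ with ⟨h, -⟩ | ⟨h, -⟩ <;> rw [h]
    · exact div_mul_cancel_of_imp fun h0 => by simp [h0]
    · rw [Real.sin_neg, neg_div_neg_eq]
      exact div_mul_cancel_of_imp fun h0 => by simp [h0]
  rw [exp_of_re_eq_zero _ (by simp [hu]), norm_smul, hu1, mul_one, Real.norm_eq_abs,
    Real.cos_abs, smul_smul, hsin]

theorem normSq_eq_re_sq_add_normSq_im (q : ℍ[ℝ]) : normSq q = q.re ^ 2 + normSq q.im := by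
  simp only [normSq_def', re_im, imI_im, imJ_im, imK_im]
  ring

theorem exists_exp_smul_im_eq {q : ℍ[ℝ]} (hq : ‖q‖ = 1) (him : q.im ≠ 0) :
    ∃ t : ℝ, NormedSpace.exp (t • q.im) = q := by
  have him0 : 0 < ‖q.im‖ := norm_pos_iff.2 him
  have hre : q.re ^ 2 + ‖q.im‖ ^ 2 = 1 := by
    rw [sq ‖q.im‖, ← normSq_eq_norm_mul_self, ← normSq_eq_re_sq_add_normSq_im,
      normSq_eq_norm_mul_self, hq, one_mul]
  have hre1 : |q.re| ≤ 1 := by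
    rw [← sq_le_one_iff_abs_le_one]
    nlinarith
  have hu : ‖‖q.im‖⁻¹ • q.im‖ = 1 := by simpa using norm_smul_inv_norm (𝕜 := ℝ) him
  refine ⟨Real.arccos q.re / ‖q.im‖, ?_⟩
  rw [div_eq_mul_inv, mul_smul, exp_smul_of_re_eq_zero_of_norm_eq_one (by simp) hu,
    Real.cos_arccos (abs_le.1 hre1).1 (abs_le.1 hre1).2, Real.sin_arccos,
    show 1 - q.re ^ 2 = ‖q.im‖ ^ 2 by linarith, Real.sqrt_sq him0.le, smul_smul,
    mul_inv_cancel₀ him0.ne', one_smul, re_add_im]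

end Quaternion

open Quaternion

noncomputable def rotorFromI (v : ℍ[ℝ]) (c : ℝ) : ℍ[ℝ] := (v - c • quatI) * quatK

theorem rotorFromI_mul_smul_quatI {v : ℍ[ℝ]} {c : ℝ} (hv : v.re = 0) (hc : normSq v = c ^ 2) :
    rotorFromI v c * (c • quatI) = v * rotorFromI v c := by
  have hk : quatK * (c • quatI) = -(c • quatI * quatK) := by ext <;> simp
  have huv : c • quatI * (c • quatI) = v * v :=
    mul_self_eq_mul_self_of_re_eq_zero (by simp) hv (by simp [normSq_def', hc])
  exact sub_mul_mul_eq_mul_sub_mul_of_anticomm huv hk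

theorem imK_rotorFromI {v : ℍ[ℝ]} (hv : v.re = 0) (c : ℝ) : (rotorFromI v c).imK = 0 := by
  simp [rotorFromI, hv]

theorem im_rotorFromI_ne_zero {v : ℍ[ℝ]} {c : ℝ} (hv : v.re = 0) (hc : normSq v = c ^ 2)
    (hvc : v ≠ c • quatI) : (rotorFromI v c).im ≠ 0 := by
  intro h
  have hvJ : v.imJ = 0 := by simpa [rotorFromI] using congrArg QuaternionAlgebra.imI h
  have hvI : v.imI = c := by
    simpa [rotorFromI, sub_eq_zero, eq_comm] using congrArg QuaternionAlgebra.imJ h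
  have hvK : v.imK = 0 :=
    pow_eq_zero_iff two_ne_zero |>.1 (by rw [normSq_def', hv, hvI, hvJ] at hc; linarith)
  exact hvc (by ext <;> simp [hv, hvI, hvJ, hvK])

/-- Every pure-imaginary quaternion `d·i + e·j + f·k` is the image of `c·i`,
`c = √(d²+e²+f²)`, under conjugation by `exp(a·i + b·j)` for suitable `a, b ∈ ℝ`
(Claim inside the proof of Theorem 6.12 of the paper). -/
theorem stmt_5 (d e f : ℝ) :
    ∃ a b : ℝ,
      (NormedSpace.exp (a • quatI + b • quatJ)) *
          (Real.sqrt (d ^ 2 + e ^ 2 + f ^ 2) • quatI) *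
          (NormedSpace.exp (a • quatI + b • quatJ))⁻¹
        = d • quatI + e • quatJ + f • quatK := by
  set c := √(d ^ 2 + e ^ 2 + f ^ 2)
  set v := d • quatI + e • quatJ + f • quatK
  by_cases hvc : v = c • quatI
  · exact ⟨0, 0, by simp [hvc]⟩
  have hv : v.re = 0 := by simp [v]
  have hc : normSq v = c ^ 2 := by
    rw [Real.sq_sqrt (by positivity)]
    simp [normSq_def', v]
  set w := rotorFromI v c
  have him : w.im ≠ 0 := im_rotorFromI_ne_zero hv hc hvc
  have hw : w ≠ 0 := fun h => him (by simp [h])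
  set q := ‖w‖⁻¹ • w
  have hq : ‖q‖ = 1 := by simpa using norm_smul_inv_norm (𝕜 := ℝ) hw
  obtain ⟨t, ht⟩ := exists_exp_smul_im_eq hq (by simpa [q, hw] using him)
  refine ⟨t * q.imI, t * q.imJ, ?_⟩
  have hexp_arg : (t * q.imI) • quatI + (t * q.imJ) • quatJ = t • q.im := by
    ext <;> simp [q, show w.imK = 0 from imK_rotorFromI hv c]
  rw [hexp_arg, ht, mul_inv_eq_iff_eq_mul₀ (by simpa [q] using hw), smul_mul_assoc,
    rotorFromI_mul_smul_quatI hv hc, mul_smul_comm]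
end

section
/- Let n ≥ 1, let M be a symmetric n×n matrix with rational entries, defining the quadratic form q(x) = xᵀMx and the polar pairing B(x, y) = xᵀMy, and let a ∈ ℚ. Suppose v₀ ∈ ℚⁿ satisfies q(v₀) = a. Let w ∈ ℝⁿ satisfy q(w) = a (the form extended to ℝⁿ) and B(v₀, w) ≠ a. Then for every ε > 0 there exists v ∈ ℚⁿ with q(v) = a and ‖w − v‖ < ε, where ‖·‖ is the Euclidean norm on ℝⁿ. -/
/-!
The line through the rational point `v₀` in a rational direction `d` meets the quadric
`q = a` in a second point, `v₀ + t d` with `t = -2 B(v₀, d) / q(d)`, which is again rational.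
This second intersection point depends continuously on `d` wherever `q(d) ≠ 0`, and for
`d = w - v₀` it is `w` itself: `q(w - v₀) = 2 (a - B(v₀, w)) ≠ 0`. Approximating `w - v₀` by
rational directions therefore yields rational points of the quadric arbitrarily close to `w`.
-/

open Matrix Filter Topology

namespace Matrix

variable {R K L n : Type*} [Fintype n]

theorem IsSymm.dotProduct_mulVec_comm [CommSemiring R] {M : Matrix n n R} (hM : M.IsSymm)
    (x y : n → R) : x ⬝ᵥ M *ᵥ y = y ⬝ᵥ M *ᵥ x := by
  rw [dotProduct_mulVec, ← mulVec_transpose, hM.eq, dotProduct_comm]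

theorem IsSymm.dotProduct_mulVec_sub_self [CommRing R] {M : Matrix n n R} (hM : M.IsSymm)
    (x y : n → R) :
    (x - y) ⬝ᵥ M *ᵥ (x - y) = x ⬝ᵥ M *ᵥ x - 2 * (y ⬝ᵥ M *ᵥ x) + y ⬝ᵥ M *ᵥ y := by
  simp only [mulVec_sub, dotProduct_sub, sub_dotProduct, hM.dotProduct_mulVec_comm x y]
  ring

theorem IsSymm.dotProduct_mulVec_add_smul [CommRing R] {M : Matrix n n R} (hM : M.IsSymm)
    (u d : n → R) (t : R) :
    (u + t • d) ⬝ᵥ M *ᵥ (u + t • d) =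
      u ⬝ᵥ M *ᵥ u + t * (2 * (u ⬝ᵥ M *ᵥ d) + t * (d ⬝ᵥ M *ᵥ d)) := by
  simp only [mulVec_add, mulVec_smul, dotProduct_add, add_dotProduct, dotProduct_smul,
    smul_dotProduct, smul_eq_mul, hM.dotProduct_mulVec_comm d u]
  ring

theorem _root_.RingHom.map_dotProduct_mulVec [CommSemiring R] [CommSemiring K] (f : R →+* K)
    (M : Matrix n n R) (x y : n → R) :
    f (x ⬝ᵥ M *ᵥ y) = (f ∘ x) ⬝ᵥ M.map f *ᵥ (f ∘ y) := by
  rw [RingHom.map_dotProduct]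
  congr 1
  ext i
  exact RingHom.map_mulVec f M y i

variable [Field K]

/-- The second point where the line through `u` with direction `d` meets the quadric
`x ⬝ᵥ M *ᵥ x = u ⬝ᵥ M *ᵥ u`; when `d` is isotropic the division by `0` makes it `u`. -/
noncomputable def secondIntersection (M : Matrix n n K) (u d : n → K) : n → K :=
  u + (-(2 * (u ⬝ᵥ M *ᵥ d)) / (d ⬝ᵥ M *ᵥ d)) • d

theorem IsSymm.secondIntersection_mem_quadric {M : Matrix n n K} (hM : M.IsSymm) (u d : n → K) :
    secondIntersection M u d ⬝ᵥ M *ᵥ secondIntersection M u d = u ⬝ᵥ M *ᵥ u := by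
  rw [secondIntersection, hM.dotProduct_mulVec_add_smul]
  rcases eq_or_ne (d ⬝ᵥ M *ᵥ d) 0 with hd | hd
  · simp [hd]
  · field_simp
    ring

theorem IsSymm.secondIntersection_sub {M : Matrix n n K} (hM : M.IsSymm) {u w : n → K}
    (hw : w ⬝ᵥ M *ᵥ w = u ⬝ᵥ M *ᵥ u) (hd : (w - u) ⬝ᵥ M *ᵥ (w - u) ≠ 0) :
    secondIntersection M u (w - u) = w := by
  have hQ := hM.dotProduct_mulVec_sub_self w u
  have hB : u ⬝ᵥ M *ᵥ (w - u) = u ⬝ᵥ M *ᵥ w - u ⬝ᵥ M *ᵥ u := by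
    rw [mulVec_sub, dotProduct_sub]
  have ht : -(2 * (u ⬝ᵥ M *ᵥ (w - u))) / ((w - u) ⬝ᵥ M *ᵥ (w - u)) = 1 := by
    rw [div_eq_one_iff_eq hd, hQ, hB, hw]
    ring
  rw [secondIntersection, ht, one_smul, add_sub_cancel]

theorem map_secondIntersection [Field L] (f : K →+* L) (M : Matrix n n K) (u d : n → K) :
    f ∘ secondIntersection M u d = secondIntersection (M.map f) (f ∘ u) (f ∘ d) := by
  ext i
  simp [secondIntersection, ← RingHom.map_dotProduct_mulVec, map_ofNat]

theorem continuousAt_secondIntersection [TopologicalSpace K] [IsTopologicalRing K]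
    [ContinuousInv₀ K] (M : Matrix n n K) (u : n → K) {d : n → K}
    (hd : d ⬝ᵥ M *ᵥ d ≠ 0) : ContinuousAt (secondIntersection M u) d := by
  unfold secondIntersection
  fun_prop (disch := exact hd)

end Matrix

theorem stmt_6_general (n : ℕ) (M : Matrix (Fin n) (Fin n) ℚ)
    (hM : M.IsSymm) (a : ℚ) (v₀ : Fin n → ℚ)
    (hv₀ : v₀ ⬝ᵥ M.mulVec v₀ = a)
    (w : Fin n → ℝ)
    (hw : w ⬝ᵥ (M.map (fun x : ℚ => (x : ℝ))).mulVec w = (a : ℝ))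
    (hB : (fun i => (v₀ i : ℝ)) ⬝ᵥ (M.map (fun x : ℚ => (x : ℝ))).mulVec w ≠ (a : ℝ)) :
    ∀ ε : ℝ, 0 < ε → ∃ v : Fin n → ℚ,
      v ⬝ᵥ M.mulVec v = a ∧
      Real.sqrt (∑ i, (w i - (v i : ℝ)) ^ 2) < ε := by
  intro ε hε
  let f := Rat.castHom ℝ
  have hMr : (M.map f).IsSymm := hM.map f
  have hu : (f ∘ v₀) ⬝ᵥ M.map f *ᵥ (f ∘ v₀) = a := by
    rw [← RingHom.map_dotProduct_mulVec, hv₀, Rat.coe_castHom]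
  have hw' : w ⬝ᵥ M.map f *ᵥ w = a := hw
  have hB' : (f ∘ v₀) ⬝ᵥ M.map f *ᵥ w ≠ a := hB
  have hd : (w - f ∘ v₀) ⬝ᵥ M.map f *ᵥ (w - f ∘ v₀) ≠ 0 := by
    rw [hMr.dotProduct_mulVec_sub_self, hu]
    exact fun h => hB' (by linarith)
  have hball : ∀ᶠ x in 𝓝 w, Real.sqrt (∑ i, (w i - x i) ^ 2) < ε :=
    (by fun_prop : Continuous fun x : Fin n → ℝ => Real.sqrt (∑ i, (w i - x i) ^ 2)).continuousAt
      |>.eventually_lt continuousAt_const (by simpa using hε)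
  have hg := continuousAt_secondIntersection (M.map f) (f ∘ v₀) hd
  rw [ContinuousAt, hMr.secondIntersection_sub (by rw [hw', hu]) hd] at hg
  obtain ⟨d, hnear⟩ := (DenseRange.piMap fun _ => Rat.denseRange_cast).mem_nhds (hg hball)
  refine ⟨secondIntersection M v₀ d, hM.secondIntersection_mem_quadric v₀ d ▸ hv₀, ?_⟩
  change √(∑ i, (w i - secondIntersection (M.map f) (f ∘ v₀) (f ∘ d) i) ^ 2) < ε at hnear
  rwa [← map_secondIntersection] at hnear

/-- Density of rational points on a rational quadric near a real point whose polar
pairing with a given rational point `v₀` differs from `a`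
(Claim 6.14 of the paper). -/
theorem stmt_6 (n : ℕ) (hn : 1 ≤ n) (M : Matrix (Fin n) (Fin n) ℚ)
    (hM : M.IsSymm) (a : ℚ) (v₀ : Fin n → ℚ)
    (hv₀ : v₀ ⬝ᵥ M.mulVec v₀ = a)
    (w : Fin n → ℝ)
    (hw : w ⬝ᵥ (M.map (fun x : ℚ => (x : ℝ))).mulVec w = (a : ℝ))
    (hB : (fun i => (v₀ i : ℝ)) ⬝ᵥ (M.map (fun x : ℚ => (x : ℝ))).mulVec w ≠ (a : ℝ)) :
    ∀ ε : ℝ, 0 < ε → ∃ v : Fin n → ℚ,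
      v ⬝ᵥ M.mulVec v = a ∧
      Real.sqrt (∑ i, (w i - (v i : ℝ)) ^ 2) < ε :=
  stmt_6_general n M hM a v₀ hv₀ w hw hB
end

section
/- Let s ≥ 1 and let w ∈ ℝ^s. Suppose that for every sign pattern η : {1, …, s} → {−1, +1} there exist a real number C_η > 0 and a vector v_η ∈ ℝ^s such that η_i · (C_η·w_i − (v_η)_i) > 0 for all i. Then w is a nonnegative real linear combination of the vectors {v_η : η a sign pattern}, i.e. w ∈ Σ_η ℝ_{≥0}·v_η. -/
/-!
Put `e η := C η • w - v η`, a vector with sign pattern `η`. Whatever the linear functional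
`f x = ∑ i, g i * x i`, the pattern `η i := (g i < 0)` gives `f (e η) ≤ 0`, so no functional
separates `0` from the convex hull of the `e η`, and `0 = ∑ η, μ η • e η` with convex weights `μ`.
Rearranged, `(∑ η, μ η * C η) • w = ∑ η, μ η • v η`, and the left coefficient is positive.
-/

open Finset Set

section ConvexHull

variable {R E ι : Type*} [Field R] [LinearOrder R] [IsStrictOrderedRing R]
  [AddCommGroup E] [Module R E] [Fintype ι]

theorem exists_weights_of_mem_convexHull_range {v : ι → E} {x : E}
    (hx : x ∈ convexHull R (range v)) :
    ∃ μ : ι → R, (∀ i, 0 ≤ μ i) ∧ ∑ i, μ i = 1 ∧ ∑ i, μ i • v i = x := by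
  classical
  rw [convexHull_range_eq_exists_affineCombination] at hx
  obtain ⟨s, w, hw₀, hw₁, rfl⟩ := hx
  have hsum : ∑ i, (s : Set ι).indicator w i = 1 := by
    rwa [Finset.sum_indicator_subset _ s.subset_univ]
  refine ⟨(s : Set ι).indicator w, fun i => ?_, hsum, ?_⟩
  · by_cases hi : i ∈ s <;> simp [hi, hw₀]
  · rw [Finset.affineCombination_indicator_subset _ _ s.subset_univ,
      Finset.affineCombination_eq_linear_combination _ _ _ hsum]

theorem exists_nonneg_sum_smul_eq_of_zero_mem_convexHull {C : ι → R} {v : ι → E} {w : E}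
    (hC : ∀ i, 0 < C i) (h0 : (0 : E) ∈ convexHull R (range fun i => C i • w - v i)) :
    ∃ c : ι → R, (∀ i, 0 ≤ c i) ∧ w = ∑ i, c i • v i := by
  obtain ⟨μ, hμ₀, hμ₁, hμe⟩ := exists_weights_of_mem_convexHull_range h0
  set t := ∑ i, μ i * C i
  have ht : 0 < t := by
    obtain ⟨i, -, hi⟩ := Finset.exists_lt_of_sum_lt (s := univ) (f := fun _ => (0 : R)) (g := μ)
      (by simp [hμ₁])
    exact Finset.sum_pos' (fun j _ => mul_nonneg (hμ₀ j) (hC j).le)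
      ⟨i, mem_univ i, mul_pos hi (hC i)⟩
  have htw : t • w = ∑ i, μ i • v i := by
    simp only [smul_sub, Finset.sum_sub_distrib, smul_smul, ← Finset.sum_smul] at hμe
    exact sub_eq_zero.mp hμe
  refine ⟨fun i => t⁻¹ * μ i, fun i => mul_nonneg (inv_nonneg.mpr ht.le) (hμ₀ i), ?_⟩
  simp only [← smul_smul, ← Finset.smul_sum, ← htw, inv_smul_smul₀ ht.ne']

end ConvexHull

theorem zero_mem_convexHull_of_signPattern {ι : Type*} [Fintype ι]
    (e : (ι → Bool) → ι → ℝ) (he : ∀ η i, 0 ≤ (if η i then (1 : ℝ) else -1) * e η i) :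
    (0 : ι → ℝ) ∈ convexHull ℝ (range e) := by
  classical
  by_contra h0
  obtain ⟨f, u, hf0, hfu⟩ := geometric_hahn_banach_point_closed (convex_convexHull ℝ _)
    ((Set.finite_range e).isCompact_convexHull ℝ).isClosed h0
  set g : ι → ℝ := fun i => f fun j => if i = j then 1 else 0
  set η : ι → Bool := fun i => decide (g i < 0)
  have hterm : ∀ i, e η i * g i ≤ 0 := by
    intro i
    have hsign := he η i
    by_cases hg : g i < 0
    · rw [show η i = true from decide_eq_true hg, if_pos rfl, one_mul] at hsign
      exact mul_nonpos_of_nonneg_of_nonpos hsign hg.le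
    · rw [show η i = false from decide_eq_false hg, if_neg Bool.false_ne_true, neg_one_mul,
        neg_nonneg] at hsign
      exact mul_nonpos_of_nonpos_of_nonneg hsign (not_lt.mp hg)
  have hfe : f (e η) ≤ 0 := by
    rw [show f (e η) = _ from f.toLinearMap.pi_apply_eq_sum_univ (e η)]
    exact Finset.sum_nonpos fun i _ => hterm i
  have := hfu _ (subset_convexHull ℝ _ (mem_range_self η))
  linarith [map_zero f]

theorem stmt_10_general (s : ℕ) (w : Fin s → ℝ)
    (C : (Fin s → Bool) → ℝ) (v : (Fin s → Bool) → (Fin s → ℝ))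
    (hC : ∀ η, 0 < C η)
    (hv : ∀ η i, 0 < (if η i then (1 : ℝ) else -1) * (C η * w i - v η i)) :
    ∃ c : (Fin s → Bool) → ℝ, (∀ η, 0 ≤ c η) ∧ w = ∑ η, c η • v η :=
  exists_nonneg_sum_smul_eq_of_zero_mem_convexHull hC
    (zero_mem_convexHull_of_signPattern _ fun η i => (hv η i).le)

/-- If for every sign pattern `η` (encoded by `Fin s → Bool`) there are `C_η > 0`
and a vector `v_η` with `η_i · (C_η·w_i − (v_η)_i) > 0` for all `i`, then `w` lies
in the cone `Σ_η ℝ_{≥0}·v_η` (step in the proof of Theorem 4.7(a) of the paper). -/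
theorem stmt_10 (s : ℕ) (hs : 1 ≤ s) (w : Fin s → ℝ)
    (C : (Fin s → Bool) → ℝ) (v : (Fin s → Bool) → (Fin s → ℝ))
    (hC : ∀ η, 0 < C η)
    (hv : ∀ η i, 0 < (if η i then (1 : ℝ) else -1) * (C η * w i - v η i)) :
    ∃ c : (Fin s → Bool) → ℝ, (∀ η, 0 ≤ c η) ∧ w = ∑ η, c η • v η :=
  stmt_10_general s w C v hC hv
end
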